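/- arXiv:2407.07933 — 6 statements merged into one kernel-verified Lean document; each statement's English description precedes it below -/
import Mathlib

section
/- Let ω = (Σ_{k=1}^m c_k A_{X,k} A_{Y,k}) / (Σ_{k=1}^m c_k A_{X,k}²) with all c_k > 0 and Σ_k c_k A_{X,k}² ≠ 0, where A_{X,k} = γ_{X,k} + β_{Y→X}γ_{Y,k} and A_{Y,k} = γ_{Y,k} + β_{X→Y}γ_{X,k}. Then β_{X→Y} − ω = (β_{X→Y}β_{Y→X} − 1)·(Σ_k c_k A_{X,k} γ_{Y,k}) / (Σ_k c_k A_{X,k}²). -/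
/-- Identity for β_{X→Y} − ω in the TSLS limit with invalid instruments. -/
theorem stmt_9 (m : ℕ) (βXY βYX : ℝ) (γX γY c : Fin m → ℝ)
    (hc : ∀ k, 0 < c k)
    (hden : (∑ k, c k * (γX k + βYX * γY k) ^ 2) ≠ 0) :
    βXY - (∑ k, c k * (γX k + βYX * γY k) * (γY k + βXY * γX k)) /
        (∑ k, c k * (γX k + βYX * γY k) ^ 2) =
      (βXY * βYX - 1) * (∑ k, c k * (γX k + βYX * γY k) * γY k) /
        (∑ k, c k * (γX k + βYX * γY k) ^ 2) := by
  have key : βXY * (∑ k, c k * (γX k + βYX * γY k) ^ 2) -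
      (∑ k, c k * (γX k + βYX * γY k) * (γY k + βXY * γX k)) =
      (βXY * βYX - 1) * (∑ k, c k * (γX k + βYX * γY k) * γY k) := by
    rw [Finset.mul_sum, Finset.mul_sum, ← Finset.sum_sub_distrib]
    exact Finset.sum_congr rfl fun k _ => by ring
  field_simp
  have e : (∑ k, c k * γY k * (γX k + βYX * γY k)) = ∑ k, c k * (γX k + βYX * γY k) * γY k :=
    Finset.sum_congr rfl fun k _ => by ring
  rw [e]
  linarith [key]
end

section
/- With A_{X,k}, A_{Y,k} and ω = (Σ_k c_k A_{X,k} A_{Y,k})/(Σ_k c_k A_{X,k}²) as above, define for an index j: E = (1 − β_{Y→X}ω)·γ_{Y,j} + (β_{X→Y} − ω)·γ_{X,j}. Then E = (1 − β_{X→Y}β_{Y→X})·(Σ_k c_k A_{X,k}(γ_{X,k}γ_{Y,j} − γ_{Y,k}γ_{X,j})) / (Σ_k c_k A_{X,k}²). In particular, if β_{X→Y}β_{Y→X} ≠ 1 and Σ_k c_k A_{X,k}(γ_{X,k}γ_{Y,j} − γ_{Y,k}γ_{X,j}) ≠ 0, then E ≠ 0. -/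
/-- The pseudo-residual covariance expression E and its non-vanishing. -/
theorem stmt_10 (m : ℕ) (βXY βYX γXj γYj : ℝ) (γX γY c : Fin m → ℝ)
    (hc : ∀ k, 0 < c k)
    (hden : (∑ k, c k * (γX k + βYX * γY k) ^ 2) ≠ 0) :
    ((1 - βYX * ((∑ k, c k * (γX k + βYX * γY k) * (γY k + βXY * γX k)) /
          (∑ k, c k * (γX k + βYX * γY k) ^ 2))) * γYj +
      (βXY - (∑ k, c k * (γX k + βYX * γY k) * (γY k + βXY * γX k)) /
          (∑ k, c k * (γX k + βYX * γY k) ^ 2)) * γXj =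
      (1 - βXY * βYX) *
        (∑ k, c k * (γX k + βYX * γY k) * (γX k * γYj - γY k * γXj)) /
        (∑ k, c k * (γX k + βYX * γY k) ^ 2)) ∧
    (βXY * βYX ≠ 1 →
      (∑ k, c k * (γX k + βYX * γY k) * (γX k * γYj - γY k * γXj)) ≠ 0 →
      (1 - βYX * ((∑ k, c k * (γX k + βYX * γY k) * (γY k + βXY * γX k)) /
          (∑ k, c k * (γX k + βYX * γY k) ^ 2))) * γYj +
        (βXY - (∑ k, c k * (γX k + βYX * γY k) * (γY k + βXY * γX k)) /
          (∑ k, c k * (γX k + βYX * γY k) ^ 2)) * γXj ≠ 0) := by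
  set S := ∑ k, c k * (γX k + βYX * γY k) ^ 2 with hS
  set T := ∑ k, c k * (γX k + βYX * γY k) * (γY k + βXY * γX k) with hT
  set U := ∑ k, c k * (γX k + βYX * γY k) * (γX k * γYj - γY k * γXj) with hU
  have key : (S - βYX * T) * γYj + (βXY * S - T) * γXj = (1 - βXY * βYX) * U := by
    rw [hS, hT, hU, Finset.mul_sum, Finset.mul_sum, Finset.mul_sum, ← Finset.sum_sub_distrib,
      ← Finset.sum_sub_distrib, Finset.sum_mul, Finset.sum_mul, ← Finset.sum_add_distrib]
    exact Finset.sum_congr rfl fun k _ => by ring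
  have heq : (1 - βYX * (T / S)) * γYj + (βXY - T / S) * γXj = (1 - βXY * βYX) * U / S := by
    field_simp
    linear_combination key
  refine ⟨heq, fun h1 hU0 => ?_⟩
  rw [heq]
  exact div_ne_zero (mul_ne_zero (sub_ne_zero.mpr (Ne.symm h1)) hU0) hden
end

section
/- In the single-instrument reduced-form model X = Δ(γ_X·G + β_{Y→X}·γ_Y·G + e_X), Y = Δ(β_{X→Y}·γ_X·G + γ_Y·G + e_Y) with Cov(G,e_X)=Cov(G,e_Y)=0, Var(G)>0, Δ = 1/(1−β_{X→Y}β_{Y→X}), γ_X ≠ 0, γ_Y = 0, and Var(X) > 0, Var(Y) > 0: if β_{X→Y}²·Var(X) < Var(Y), then |Corr(G,Y)/Corr(G,X)| = |β_{X→Y}|·√(Var(X)/Var(Y)) < 1. -/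
open MeasureTheory

noncomputable def Cov {Ω : Type*} [MeasurableSpace Ω] (μ : Measure Ω) (f g : Ω → ℝ) : ℝ :=
  ∫ ω, f ω * g ω ∂μ - (∫ ω, f ω ∂μ) * (∫ ω, g ω ∂μ)

noncomputable def Var {Ω : Type*} [MeasurableSpace Ω] (μ : Measure Ω) (f : Ω → ℝ) : ℝ :=
  Cov μ f f

noncomputable def Corr {Ω : Type*} [MeasurableSpace Ω] (μ : Measure Ω) (f g : Ω → ℝ) : ℝ :=
  Cov μ f g / Real.sqrt (Var μ f * Var μ g)

/- With Y = Δ·(β·γ_X·G + e_Y) and X = Δ·(γ_X·G + e_X), the instrument G is uncorrelated with the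
errors, so Cov(G, Y) = β·Cov(G, X). The common factor √Var(G) cancels in the correlation ratio,
leaving β·√(Var X / Var Y), which is below 1 in absolute value exactly when β²·Var X < Var Y. -/

section Covariance

variable {Ω : Type*} [MeasurableSpace Ω] {μ : Measure Ω}

lemma cov_mul_add_mul_right [IsFiniteMeasure μ] {f g h : Ω → ℝ}
    (hf : MemLp f 2 μ) (hg : MemLp g 2 μ) (hh : MemLp h 2 μ) (a b : ℝ) :
    Cov μ f (fun ω => a * g ω + b * h ω) = a * Cov μ f g + b * Cov μ f h := by
  have hfg : Integrable (fun ω => f ω * g ω) μ := hf.integrable_mul hg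
  have hfh : Integrable (fun ω => f ω * h ω) μ := hf.integrable_mul hh
  have hg1 : Integrable g μ := hg.integrable (by norm_num)
  have hh1 : Integrable h μ := hh.integrable (by norm_num)
  have hprod : ∫ ω, f ω * (a * g ω + b * h ω) ∂μ
      = a * ∫ ω, f ω * g ω ∂μ + b * ∫ ω, f ω * h ω ∂μ := by
    simp only [mul_add, mul_left_comm (f _)]
    rw [integral_add (hfg.const_mul a) (hfh.const_mul b), integral_const_mul, integral_const_mul]
  have hsum : ∫ ω, (a * g ω + b * h ω) ∂μ = a * ∫ ω, g ω ∂μ + b * ∫ ω, h ω ∂μ := by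
    rw [integral_add (hg1.const_mul a) (hh1.const_mul b), integral_const_mul, integral_const_mul]
  simp only [Cov, hprod, hsum]
  ring

lemma corr_div_corr_of_cov_eq_mul {G X Y : Ω → ℝ} {c : ℝ}
    (hcov : Cov μ G Y = c * Cov μ G X) (hGX : Cov μ G X ≠ 0)
    (hG : 0 < Var μ G) (hY : 0 ≤ Var μ Y) :
    Corr μ G Y / Corr μ G X = c * Real.sqrt (Var μ X / Var μ Y) := by
  have hsqrt : Real.sqrt (Var μ X / Var μ Y)
      = Real.sqrt (Var μ G * Var μ X) / Real.sqrt (Var μ G * Var μ Y) := by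
    rw [← Real.sqrt_div' _ (mul_nonneg hG.le hY), mul_div_mul_left _ _ hG.ne']
  rw [Corr, Corr, hcov, hsqrt]
  field_simp

end Covariance

lemma abs_mul_sqrt_div_lt_one {b x y : ℝ} (hy : 0 < y) (hlt : b ^ 2 * x < y) :
    |b| * Real.sqrt (x / y) < 1 := by
  rw [← Real.sqrt_sq_eq_abs, ← Real.sqrt_mul (sq_nonneg b), Real.sqrt_lt' one_pos, one_pow,
    ← mul_div_assoc, div_lt_one hy]
  exact hlt

theorem stmt_11_general {Ω : Type*} [MeasurableSpace Ω] (μ : Measure Ω) [IsProbabilityMeasure μ]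
    (G eX eY X Y : Ω → ℝ) (βXY βYX γX γY : ℝ)
    (hGm : MemLp G 2 μ) (heXm : MemLp eX 2 μ) (heYm : MemLp eY 2 μ)
    (hβ : βXY * βYX ≠ 1) (hγY : γY = 0) (hγX : γX ≠ 0)
    (hGeX : Cov μ G eX = 0) (hGeY : Cov μ G eY = 0)
    (hVarG : 0 < Var μ G) (hVarY : 0 < Var μ Y)
    (hX : ∀ ω, X ω = (1 - βXY * βYX)⁻¹ *
        (γX * G ω + βYX * γY * G ω + eX ω))
    (hY : ∀ ω, Y ω = (1 - βXY * βYX)⁻¹ *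
        (βXY * γX * G ω + γY * G ω + eY ω))
    (hlt : βXY ^ 2 * Var μ X < Var μ Y) :
    |Corr μ G Y / Corr μ G X| = |βXY| * Real.sqrt (Var μ X / Var μ Y) ∧
    |Corr μ G Y / Corr μ G X| < 1 := by
  subst hγY
  set Δ := (1 - βXY * βYX)⁻¹
  have hΔ : Δ ≠ 0 := inv_ne_zero (sub_ne_zero.mpr hβ.symm)
  have hXlin : X = fun ω => (Δ * γX) * G ω + Δ * eX ω := funext fun ω => by rw [hX]; ring
  have hYlin : Y = fun ω => (Δ * βXY * γX) * G ω + Δ * eY ω := funext fun ω => by rw [hY]; ring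
  have hCovX : Cov μ G X = Δ * γX * Var μ G := by
    rw [hXlin, cov_mul_add_mul_right hGm hGm heXm, hGeX, Var]; ring
  have hCovY : Cov μ G Y = βXY * Cov μ G X := by
    rw [hYlin, cov_mul_add_mul_right hGm hGm heYm, hGeY, hCovX, Var]; ring
  have hCovX_ne : Cov μ G X ≠ 0 := hCovX ▸ mul_ne_zero (mul_ne_zero hΔ hγX) hVarG.ne'
  have hratio := corr_div_corr_of_cov_eq_mul hCovY hCovX_ne hVarG hVarY.le
  rw [hratio, abs_mul, abs_of_nonneg (Real.sqrt_nonneg _)]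
  exact ⟨rfl, abs_mul_sqrt_div_lt_one hVarY hlt⟩

/-- Direction criterion: for a valid instrument of X → Y, the correlation ratio is < 1. -/
theorem stmt_11 {Ω : Type*} [MeasurableSpace Ω] (μ : Measure Ω) [IsProbabilityMeasure μ]
    (G eX eY X Y : Ω → ℝ) (βXY βYX γX γY : ℝ)
    (hGm : MemLp G 2 μ) (heXm : MemLp eX 2 μ) (heYm : MemLp eY 2 μ)
    (hβ : βXY * βYX ≠ 1) (hγY : γY = 0) (hγX : γX ≠ 0)
    (hGeX : Cov μ G eX = 0) (hGeY : Cov μ G eY = 0)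
    (hVarG : 0 < Var μ G) (hVarX : 0 < Var μ X) (hVarY : 0 < Var μ Y)
    (hX : ∀ ω, X ω = (1 - βXY * βYX)⁻¹ *
        (γX * G ω + βYX * γY * G ω + eX ω))
    (hY : ∀ ω, Y ω = (1 - βXY * βYX)⁻¹ *
        (βXY * γX * G ω + γY * G ω + eY ω))
    (hlt : βXY ^ 2 * Var μ X < Var μ Y) :
    |Corr μ G Y / Corr μ G X| = |βXY| * Real.sqrt (Var μ X / Var μ Y) ∧
    |Corr μ G Y / Corr μ G X| < 1 :=
  stmt_11_general μ G eX eY X Y βXY βYX γX γY hGm heXm heYm hβ hγY hγX hGeX hGeY hVarG hVarY hX hY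
    hlt
end

section
/- In the single-instrument reduced-form model with γ_X = 0, γ_Y ≠ 0 (so G is a valid instrument for Y → X), Cov(G,e_X)=Cov(G,e_Y)=0, Var(G)>0, Var(X)>0, Var(Y)>0, and β_{Y→X} ≠ 0: if β_{Y→X}²·Var(Y) ≤ Var(X), then |Corr(G,Y)/Corr(G,X)| = (1/|β_{Y→X}|)·√(Var(X)/Var(Y)) ≥ 1. -/
open MeasureTheory

lemma my_int_mul {Ω : Type*} [MeasurableSpace Ω] {μ : Measure Ω} {f g : Ω → ℝ}
    (hf : MemLp f 2 μ) (hg : MemLp g 2 μ) : Integrable (fun ω => f ω * g ω) μ := by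
  apply Integrable.mono' (((hf.integrable_sq.add hg.integrable_sq).const_mul (1/2)))
    (hf.aestronglyMeasurable.mul hg.aestronglyMeasurable)
  filter_upwards with ω
  simp only [Pi.mul_apply, Pi.add_apply, Real.norm_eq_abs, abs_mul]
  nlinarith [sq_nonneg (|f ω| - |g ω|), sq_abs (f ω), sq_abs (g ω), abs_nonneg (f ω),
    abs_nonneg (g ω)]

lemma cov_lin {Ω : Type*} [MeasurableSpace Ω] (μ : Measure Ω) [IsProbabilityMeasure μ]
    {G e : Ω → ℝ} (hG : MemLp G 2 μ) (he : MemLp e 2 μ) (c a : ℝ) :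
    Cov μ G (fun ω => c * (a * G ω + e ω)) = c * (a * Var μ G + Cov μ G e) := by
  have hGG : Integrable (fun ω => G ω * G ω) μ := my_int_mul hG hG
  have hGe : Integrable (fun ω => G ω * e ω) μ := my_int_mul hG he
  have hGi : Integrable G μ := hG.integrable one_le_two
  have hei : Integrable e μ := he.integrable one_le_two
  have h1 : ∫ ω, G ω * (c * (a * G ω + e ω)) ∂μ
      = c * a * ∫ ω, G ω * G ω ∂μ + c * ∫ ω, G ω * e ω ∂μ := by
    rw [← integral_const_mul, ← integral_const_mul, ← integral_add
      ((hGG.const_mul (c * a))) ((hGe.const_mul c))]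
    congr 1; funext ω; ring
  have h2 : ∫ ω, c * (a * G ω + e ω) ∂μ = c * a * ∫ ω, G ω ∂μ + c * ∫ ω, e ω ∂μ := by
    rw [← integral_const_mul, ← integral_const_mul, ← integral_add
      ((hGi.const_mul (c * a))) ((hei.const_mul c))]
    congr 1; funext ω; ring
  simp only [Cov, Var, h1, h2]
  ring

/-- Direction criterion: for a valid instrument of Y → X, the correlation ratio is ≥ 1. -/
theorem stmt_12 {Ω : Type*} [MeasurableSpace Ω] (μ : Measure Ω) [IsProbabilityMeasure μ]
    (G eX eY X Y : Ω → ℝ) (βXY βYX γX γY : ℝ)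
    (hGm : MemLp G 2 μ) (heXm : MemLp eX 2 μ) (heYm : MemLp eY 2 μ)
    (hβ : βXY * βYX ≠ 1) (hγX : γX = 0) (hγY : γY ≠ 0) (hβYX : βYX ≠ 0)
    (hGeX : Cov μ G eX = 0) (hGeY : Cov μ G eY = 0)
    (hVarG : 0 < Var μ G) (hVarX : 0 < Var μ X) (hVarY : 0 < Var μ Y)
    (hX : ∀ ω, X ω = (1 - βXY * βYX)⁻¹ * (βYX * γY * G ω + eX ω))
    (hY : ∀ ω, Y ω = (1 - βXY * βYX)⁻¹ * (γY * G ω + eY ω))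
    (hle : βYX ^ 2 * Var μ Y ≤ Var μ X) :
    |Corr μ G Y / Corr μ G X| = (1 / |βYX|) * Real.sqrt (Var μ X / Var μ Y) ∧
    1 ≤ |Corr μ G Y / Corr μ G X| := by
  set Δ : ℝ := (1 - βXY * βYX)⁻¹ with hΔdef
  have hΔ : Δ ≠ 0 := inv_ne_zero (sub_ne_zero.mpr (Ne.symm hβ))
  have hXf : X = fun ω => Δ * (βYX * γY * G ω + eX ω) := funext hX
  have hYf : Y = fun ω => Δ * (γY * G ω + eY ω) := funext hY
  have hCX : Cov μ G X = Δ * (βYX * γY) * Var μ G := by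
    rw [hXf, cov_lin μ hGm heXm, hGeX]; ring
  have hCY : Cov μ G Y = Δ * γY * Var μ G := by
    rw [hYf, cov_lin μ hGm heYm, hGeY]; ring
  have hCY0 : Cov μ G Y ≠ 0 := by
    rw [hCY]; exact mul_ne_zero (mul_ne_zero hΔ hγY) (ne_of_gt hVarG)
  have hCX0 : Cov μ G X ≠ 0 := by
    rw [hCX]; exact mul_ne_zero (mul_ne_zero hΔ (mul_ne_zero hβYX hγY)) (ne_of_gt hVarG)
  have hsG : (0:ℝ) < Real.sqrt (Var μ G) := Real.sqrt_pos.mpr hVarG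
  have hsX : (0:ℝ) < Real.sqrt (Var μ X) := Real.sqrt_pos.mpr hVarX
  have hsY : (0:ℝ) < Real.sqrt (Var μ Y) := Real.sqrt_pos.mpr hVarY
  have key : |Corr μ G Y / Corr μ G X| = (1 / |βYX|) * Real.sqrt (Var μ X / Var μ Y) := by
    have hratio : Corr μ G Y / Corr μ G X
        = (Real.sqrt (Var μ G) * Real.sqrt (Var μ X)) /
          (βYX * (Real.sqrt (Var μ G) * Real.sqrt (Var μ Y))) := by
      simp only [Corr, hCX, hCY, Real.sqrt_mul hVarG.le]
      field_simp
    rw [hratio, Real.sqrt_div hVarX.le]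
    rw [abs_div, abs_mul, abs_mul, abs_mul,
      abs_of_pos hsG, abs_of_pos hsX, abs_of_pos hsY]
    field_simp
  refine ⟨key, ?_⟩
  rw [key]
  have habs : |βYX| ≤ Real.sqrt (Var μ X / Var μ Y) := by
    rw [← Real.sqrt_sq_eq_abs]
    apply Real.sqrt_le_sqrt
    rw [le_div_iff₀ hVarY]
    linarith
  have h1 : (1:ℝ) = |βYX| * (1 / |βYX|) := by
    field_simp
  calc (1:ℝ) = (1 / |βYX|) * |βYX| := by field_simp
    _ ≤ (1 / |βYX|) * Real.sqrt (Var μ X / Var μ Y) := by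
        apply mul_le_mul_of_nonneg_left habs
        positivity
end

section
/- Let ω = (Σ_{k=1}^m c_k B_k D_k)/(Σ_{k=1}^m c_k B_k²) where B_k = A_{X,k} + A_{X,U}·u_k, D_k = A_{Y,k} + A_{Y,U}·u_k, A_{X,k} = γ_{X,k}+β_{Y→X}γ_{Y,k}, A_{Y,k} = γ_{Y,k}+β_{X→Y}γ_{X,k}, A_{X,U} = γ_{X,U}+β_{Y→X}γ_{Y,U}, A_{Y,U} = γ_{Y,U}+β_{X→Y}γ_{X,U}, all c_k > 0, Σ_k c_k B_k² ≠ 0. Then 1 − β_{Y→X}ω = (1−β_{X→Y}β_{Y→X})·(Σ_k c_k B_k (γ_{X,k}+γ_{X,U}u_k))/(Σ_k c_k B_k²) and β_{X→Y} − ω = (β_{X→Y}β_{Y→X}−1)·(Σ_k c_k B_k (γ_{Y,k}+γ_{Y,U}u_k))/(Σ_k c_k B_k²). -/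
/-- Key algebraic identities in the proof of Proposition 3 with an unmeasured
confounder channel U: formulas for 1 − β_{Y→X}ω and β_{X→Y} − ω. -/
theorem stmt_17 (m : ℕ) (βXY βYX γXU γYU : ℝ) (γX γY u c : Fin m → ℝ)
    (hc : ∀ k, 0 < c k)
    (hden : (∑ k, c k *
        ((γX k + βYX * γY k) + (γXU + βYX * γYU) * u k) ^ 2) ≠ 0) :
    (1 - βYX * ((∑ k, c k * ((γX k + βYX * γY k) + (γXU + βYX * γYU) * u k) *
          ((γY k + βXY * γX k) + (γYU + βXY * γXU) * u k)) /
        (∑ k, c k * ((γX k + βYX * γY k) + (γXU + βYX * γYU) * u k) ^ 2)) =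
      (1 - βXY * βYX) *
        (∑ k, c k * ((γX k + βYX * γY k) + (γXU + βYX * γYU) * u k) *
          (γX k + γXU * u k)) /
        (∑ k, c k * ((γX k + βYX * γY k) + (γXU + βYX * γYU) * u k) ^ 2)) ∧
    (βXY - (∑ k, c k * ((γX k + βYX * γY k) + (γXU + βYX * γYU) * u k) *
          ((γY k + βXY * γX k) + (γYU + βXY * γXU) * u k)) /
        (∑ k, c k * ((γX k + βYX * γY k) + (γXU + βYX * γYU) * u k) ^ 2) =
      (βXY * βYX - 1) *
        (∑ k, c k * ((γX k + βYX * γY k) + (γXU + βYX * γYU) * u k) *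
          (γY k + γYU * u k)) /
        (∑ k, c k * ((γX k + βYX * γY k) + (γXU + βYX * γYU) * u k) ^ 2)) := by
  set S := ∑ k, c k * ((γX k + βYX * γY k) + (γXU + βYX * γYU) * u k) ^ 2 with hS
  set N := ∑ k, c k * ((γX k + βYX * γY k) + (γXU + βYX * γYU) * u k) *
      ((γY k + βXY * γX k) + (γYU + βXY * γXU) * u k) with hN
  have key1 : S - βYX * N = (1 - βXY * βYX) *
      ∑ k, c k * ((γX k + βYX * γY k) + (γXU + βYX * γYU) * u k) *
        (γX k + γXU * u k) := by
    rw [hS, hN, Finset.mul_sum, Finset.mul_sum, ← Finset.sum_sub_distrib]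
    exact Finset.sum_congr rfl fun k _ => by ring
  have key2 : βXY * S - N = (βXY * βYX - 1) *
      ∑ k, c k * ((γX k + βYX * γY k) + (γXU + βYX * γYU) * u k) *
        (γY k + γYU * u k) := by
    rw [hS, hN, Finset.mul_sum, Finset.mul_sum, ← Finset.sum_sub_distrib]
    exact Finset.sum_congr rfl fun k _ => by ring
  constructor
  · rw [← key1]; field_simp
  · rw [← key2]; field_simp
end

section
/- In the model with confounder: with ω as in the previous identity and an index j with parameters γ_{X,j}, γ_{Y,j}, u_j, define E = (1−β_{Y→X}ω)(γ_{Y,j}+γ_{Y,U}u_j) + (β_{X→Y}−ω)(γ_{X,j}+γ_{X,U}u_j). Then E·(Σ_k c_k B_k²) = (1−β_{X→Y}β_{Y→X})·Σ_k c_k B_k·[(γ_{X,k}γ_{Y,j}−γ_{Y,k}γ_{X,j}) + γ_{Y,U}(γ_{X,k}u_j−u_k γ_{X,j}) + γ_{X,U}(u_k γ_{Y,j}−γ_{Y,k}u_j)]. -/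
/-- The pseudo-residual covariance expression in the confounded model. -/
theorem stmt_18 (m : ℕ) (βXY βYX γXU γYU γXj γYj uj : ℝ) (γX γY u c : Fin m → ℝ)
    (hc : ∀ k, 0 < c k)
    (hden : (∑ k, c k *
        ((γX k + βYX * γY k) + (γXU + βYX * γYU) * u k) ^ 2) ≠ 0) :
    ((1 - βYX * ((∑ k, c k * ((γX k + βYX * γY k) + (γXU + βYX * γYU) * u k) *
          ((γY k + βXY * γX k) + (γYU + βXY * γXU) * u k)) /
        (∑ k, c k * ((γX k + βYX * γY k) + (γXU + βYX * γYU) * u k) ^ 2))) *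
        (γYj + γYU * uj) +
      (βXY - (∑ k, c k * ((γX k + βYX * γY k) + (γXU + βYX * γYU) * u k) *
          ((γY k + βXY * γX k) + (γYU + βXY * γXU) * u k)) /
        (∑ k, c k * ((γX k + βYX * γY k) + (γXU + βYX * γYU) * u k) ^ 2)) *
        (γXj + γXU * uj)) *
      (∑ k, c k * ((γX k + βYX * γY k) + (γXU + βYX * γYU) * u k) ^ 2) =
    (1 - βXY * βYX) *
      (∑ k, c k * ((γX k + βYX * γY k) + (γXU + βYX * γYU) * u k) *
        ((γX k * γYj - γY k * γXj) + γYU * (γX k * uj - u k * γXj) +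
          γXU * (u k * γYj - γY k * uj))) := by
  set S := ∑ k, c k * ((γX k + βYX * γY k) + (γXU + βYX * γYU) * u k) ^ 2 with hS
  set N := ∑ k, c k * ((γX k + βYX * γY k) + (γXU + βYX * γYU) * u k) *
      ((γY k + βXY * γX k) + (γYU + βXY * γXU) * u k) with hN
  have key : ((1 - βYX * (N / S)) * (γYj + γYU * uj) +
      (βXY - N / S) * (γXj + γXU * uj)) * S
      = ((γYj + γYU * uj) + βXY * (γXj + γXU * uj)) * S
        - N * (βYX * (γYj + γYU * uj) + (γXj + γXU * uj)) := by
    field_simp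
    ring
  rw [key, hS, hN, Finset.mul_sum, Finset.sum_mul, ← Finset.sum_sub_distrib,
    Finset.mul_sum]
  exact Finset.sum_congr rfl fun k _ => by ring
end
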